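/- Let T, S ∈ Im ℍ be purely imaginary quaternions with ‖T‖ = 1, and let r, l ∈ ℝ with (r, l) ≠ (0, 0). Then −r + l·T ≠ 0 and (T·S − S·T)·(−r + l·T)⁻¹ = (2/(r² + l²))·(T × (l·(T × S) − r·S)), where for purely imaginary quaternions p, q the cross product is p × q = (1/2)·(p·q − q·p). (This identifies the continuum limit of the Darboux transformation with the evolution equation T' = (2/(r²+l²))·T × (lT×S − rS).) -/

import Mathlib

/-!
A pure unit quaternion squares to `-1`, so `-r + l T` has conjugate `-r - l T` and
`(-r + l T)(-r - l T) = r² + l²`. Multiplying `T S - S T` by this conjugate and using `T² = -1`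
once more turns the product into `T × (l T × S - r S)` up to the factor `2`.
-/

open Quaternion

noncomputable def qcross (p q : ℍ[ℝ]) : ℍ[ℝ] :=
  (2 : ℝ)⁻¹ • (p * q - q * p)

namespace Quaternion

theorem mul_self_eq_neg_one_of_re_eq_zero_of_norm_eq_one {T : ℍ[ℝ]} (hT : T.re = 0)
    (hTnorm : ‖T‖ = 1) : T * T = -1 := by
  rw [← sq, sq_eq_neg_normSq.2 hT, normSq_eq_norm_mul_self, hTnorm, mul_one, coe_one]

theorem coe_eq_smul_one (r : ℝ) : (r : ℍ[ℝ]) = r • 1 := by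
  rw [← coe_mul_eq_smul, mul_one]

end Quaternion

section SquareRootOfMinusOne

variable {T : ℍ[ℝ]}

theorem neg_add_smul_mul_neg_sub_smul (hTT : T * T = -1) (r l : ℝ) :
    (-(r : ℍ[ℝ]) + l • T) * (-(r : ℍ[ℝ]) - l • T) = ((r ^ 2 + l ^ 2 : ℝ) : ℍ[ℝ]) := by
  simp only [add_mul, mul_sub, neg_mul, mul_neg, smul_mul_smul, hTT, coe_eq_smul_one, one_mul,
    mul_one]
  module

theorem inv_neg_add_smul (hTT : T * T = -1) (r l : ℝ) (hrl : r ^ 2 + l ^ 2 ≠ 0) :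
    (-(r : ℍ[ℝ]) + l • T)⁻¹ = (r ^ 2 + l ^ 2)⁻¹ • (-(r : ℍ[ℝ]) - l • T) := by
  apply inv_eq_of_mul_eq_one_right
  rw [mul_smul_comm, neg_add_smul_mul_neg_sub_smul hTT, coe_eq_smul_one, smul_smul,
    inv_mul_cancel₀ hrl, one_smul]

theorem commutator_mul_neg_sub_smul (hTT : T * T = -1) (r l : ℝ) (S : ℍ[ℝ]) :
    (T * S - S * T) * (-(r : ℍ[ℝ]) - l • T) = (2 : ℝ) • qcross T (l • qcross T S - r • S) := by
  -- the two sides differ by a multiple of the commutator of `S` with `T * T + 1 = 0`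
  have key : (T * S - S * T) * (-(r : ℍ[ℝ]) - l • T) - (2 : ℝ) • qcross T (l • qcross T S - r • S)
      = (l / 2) • (S * (T * T + 1) - (T * T + 1) * S) := by
    simp only [qcross, mul_sub, sub_mul, mul_add, add_mul, mul_neg, smul_sub, mul_smul_comm,
      smul_mul_assoc, mul_assoc, mul_one, one_mul, mul_coe_eq_smul]
    module
  rwa [hTT, neg_add_cancel, mul_zero, zero_mul, sub_zero, smul_zero, sub_eq_zero] at key

end SquareRootOfMinusOne

theorem darboux_continuum_limit_general
    (T S : ℍ[ℝ]) (hT : T.re = 0) (hTnorm : ‖T‖ = 1)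
    (r l : ℝ) (hrl : (r, l) ≠ (0, 0)) :
    -(r : ℍ[ℝ]) + l • T ≠ 0 ∧
      (T * S - S * T) * (-(r : ℍ[ℝ]) + l • T)⁻¹ =
        (2 / (r ^ 2 + l ^ 2)) • qcross T (l • qcross T S - r • S) := by
  have hTT := mul_self_eq_neg_one_of_re_eq_zero_of_norm_eq_one hT hTnorm
  have hsum : r ^ 2 + l ^ 2 ≠ 0 := by
    contrapose! hrl
    obtain ⟨hr, hl⟩ := (add_eq_zero_iff_of_nonneg (sq_nonneg r) (sq_nonneg l)).1 hrl
    rw [pow_eq_zero_iff two_ne_zero] at hr hl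
    rw [hr, hl]
  refine ⟨left_ne_zero_of_mul (b := -(r : ℍ[ℝ]) - l • T) ?_, ?_⟩
  · rw [neg_add_smul_mul_neg_sub_smul hTT]
    rwa [Ne, ← coe_zero, coe_inj]
  · rw [inv_neg_add_smul hTT r l hsum, mul_smul_comm, commutator_mul_neg_sub_smul hTT, smul_smul,
      div_eq_inv_mul]

theorem darboux_continuum_limit
    (T S : ℍ[ℝ]) (hT : T.re = 0) (hS : S.re = 0) (hTnorm : ‖T‖ = 1)
    (r l : ℝ) (hrl : (r, l) ≠ (0, 0)) :
    -(r : ℍ[ℝ]) + l • T ≠ 0 ∧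
      (T * S - S * T) * (-(r : ℍ[ℝ]) + l • T)⁻¹ =
        (2 / (r ^ 2 + l ^ 2)) • qcross T (l • qcross T S - r • S) :=
  darboux_continuum_limit_general T S hT hTnorm r l hrl
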